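/- There exists a constant c_3 > 0, independent of N and K, such that |⟨L_2 v, v⟩| ≤ c_3 N^{1/2} for every v ∈ V_0 with ‖Dv‖_{ℓ^2_ε} = 1. -/
import Mathlib

open Finset

set_option maxHeartbeats 1000000

noncomputable def eps (N : ℤ) : ℝ := 1 / (N : ℝ)

noncomputable def Dd (N : ℤ) (v : ℤ → ℝ) (j : ℤ) : ℝ := (v j - v (j-1)) / eps N

noncomputable def L2op (N K : ℤ) (v : ℤ → ℝ) (j : ℤ) : ℝ :=
  if -K ≤ j ∧ j ≤ K then (-v (j+2) + 2 * v j - v (j-2)) / (eps N)^2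
  else 4 * (-v (j+1) + 2 * v j - v (j-1)) / (eps N)^2

lemma sum_Icc_top (f : ℤ → ℝ) {a b : ℤ} (h : a ≤ b + 1) :
    ∑ j ∈ Icc a (b+1), f j = ∑ j ∈ Icc a b, f j + f (b+1) := by
  rw [show Icc a (b+1) = insert (b+1) (Icc a b) by ext x; simp; omega,
    Finset.sum_insert (by simp)]
  ring

lemma sum_Icc_bot (f : ℤ → ℝ) {a b : ℤ} (h : a ≤ b + 1) :
    ∑ j ∈ Icc a (b+1), f j = f a + ∑ j ∈ Icc (a+1) (b+1), f j := by
  rw [show Icc a (b+1) = insert a (Icc (a+1) (b+1)) by ext x; simp; omega,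
    Finset.sum_insert (by simp)]

lemma sum_shift (f : ℤ → ℝ) (a b c : ℤ) :
    ∑ j ∈ Icc a b, f (j + c) = ∑ j ∈ Icc (a+c) (b+c), f j := by
  rw [← Finset.map_add_right_Icc, Finset.sum_map]
  rfl

lemma abel_fwd (f g : ℤ → ℝ) (a : ℤ) : ∀ b, a ≤ b →
    ∑ j ∈ Icc a b, (f (j+1) - f j) * g j
      = ∑ j ∈ Icc (a+1) b, f j * (g (j-1) - g j) + f (b+1) * g b - f a * g a := by
  refine Int.le_induction ?_ ?_
  · rw [show Icc (a+1) a = ∅ by simp, Finset.Icc_self]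
    simp; ring
  · intro b hb ih
    rw [sum_Icc_top (fun j => (f (j+1) - f j) * g j) (by omega),
      sum_Icc_top (fun j => f j * (g (j-1) - g j)) (by omega), ih,
      show b + 1 - 1 = b from by ring]
    ring

lemma abel_bwd (f g : ℤ → ℝ) (a : ℤ) : ∀ b, a ≤ b →
    ∑ j ∈ Icc a b, (f (j-1) - f j) * g j
      = ∑ j ∈ Icc a (b-1), f j * (g (j+1) - g j) + f (a-1) * g a - f b * g b := by
  refine Int.le_induction ?_ ?_
  · rw [show Icc a (a-1) = ∅ by apply Finset.Icc_eq_empty; omega, Finset.Icc_self]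
    simp; ring
  · intro b hb ih
    rw [sum_Icc_top (fun j => (f (j-1) - f j) * g j) (by omega), ih,
      show b + 1 - 1 = b from by ring,
      show Icc a b = Icc a ((b-1)+1) from by norm_num,
      sum_Icc_top (fun j => f j * (g (j+1) - g j)) (by omega),
      show b - 1 + 1 = b from by ring]
    ring

lemma telescope (f : ℤ → ℝ) (a : ℤ) : ∀ b, a ≤ b →
    ∑ j ∈ Icc (a+1) b, (f j - f (j-1)) = f b - f a := by
  refine Int.le_induction ?_ ?_
  · simp
  · intro b hb ih
    rw [sum_Icc_top (fun j => f j - f (j-1)) (by omega), ih,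
      show b + 1 - 1 = b from by ring]
    ring

/-- There is `c₃ > 0`, independent of `N` and `K`, with
`|⟨L₂v, v⟩| ≤ c₃ N^{1/2}` for all `v ∈ V₀` with `‖Dv‖_{ℓ²_ε} = 1`. -/
theorem L2_rayleigh_sqrtN_bound :
    ∃ c3 : ℝ, 0 < c3 ∧
      ∀ N K : ℤ, 1 ≤ N → 2 ≤ K → 2 * K ≤ N →
        ∀ v : ℤ → ℝ, v (-N) = 0 → v N = 0 →
          Real.sqrt (eps N * ∑ j ∈ Finset.Icc (-N+1) N, (Dd N v j)^2) = 1 →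
          |eps N * ∑ j ∈ Finset.Icc (-N+1) (N-1), L2op N K v j * v j| ≤
            c3 * Real.sqrt (N : ℝ) := by
  refine ⟨21, by norm_num, ?_⟩
  intro N K hN1 hK2 hKN v hvm hvN hnorm
  set w : ℤ → ℝ := Dd N v with hw
  set δ : ℤ → ℝ := fun j => (2 * v j - v (j+1) - v (j-1)) / (eps N)^2 with hδdef
  have hN4 : (4:ℤ) ≤ N := by omega
  have hN0 : (0:ℝ) < (N:ℝ) := by exact_mod_cast (by omega : (0:ℤ) < N)
  have heps : eps N = 1/(N:ℝ) := rfl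
  have hepspos : 0 < eps N := by rw [heps]; positivity
  have hepsne : eps N ≠ 0 := ne_of_gt hepspos
  have hNne : (N:ℝ) ≠ 0 := ne_of_gt hN0
  -- basic relations
  have hw_eq : ∀ j, v j - v (j-1) = eps N * w j := by
    intro j
    rw [hw]; unfold Dd; field_simp
  have hδj : ∀ j, δ j = (N:ℝ) * (w j - w (j+1)) := by
    intro j
    rw [hδdef, hw]; unfold Dd
    simp only [show ∀ k : ℤ, k + 1 - 1 = k from fun k => by ring]
    rw [heps]; field_simp; ring
  -- the constraint
  have hsum1 : eps N * ∑ j ∈ Icc (-N+1) N, (w j)^2 = 1 := Real.sqrt_eq_one.mp hnorm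
  have hsumN : ∑ j ∈ Icc (-N+1) N, (w j)^2 = (N:ℝ) := by
    rw [heps] at hsum1; field_simp at hsum1; linarith
  have hsub : ∀ a b : ℤ, -N+1 ≤ a → b ≤ N →
      ∑ j ∈ Icc a b, (w j)^2 ≤ (N:ℝ) := by
    intro a b ha hb
    rw [← hsumN]
    apply Finset.sum_le_sum_of_subset_of_nonneg
    · intro x hx; simp only [Finset.mem_Icc] at *; omega
    · intro i _ _; positivity
  have hw_abs : ∀ j : ℤ, -N+1 ≤ j → j ≤ N → |w j| ≤ Real.sqrt (N:ℝ) := by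
    intro j h1 h2
    apply Real.abs_le_sqrt
    calc (w j)^2 = ∑ i ∈ Icc j j, (w i)^2 := by rw [Finset.Icc_self, Finset.sum_singleton]
      _ ≤ (N:ℝ) := hsub j j h1 h2
  -- bound on |v j|
  have hvb : ∀ j : ℤ, -N ≤ j → j ≤ N → |v j| ≤ Real.sqrt 2 := by
    intro j hj1 hj2
    have htel : v j = ∑ i ∈ Icc (-N+1) j, (v i - v (i-1)) := by
      have h := telescope v (-N) j hj1
      rw [hvm] at h; linarith
    have habs : |v j| ≤ ∑ i ∈ Icc (-N+1) j, |v i - v (i-1)| := by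
      rw [htel]; exact Finset.abs_sum_le_sum_abs _ _
    have hstep : ∑ i ∈ Icc (-N+1) j, |v i - v (i-1)| = eps N * ∑ i ∈ Icc (-N+1) j, |w i| := by
      rw [Finset.mul_sum]
      apply Finset.sum_congr rfl
      intro i _
      rw [hw_eq i, abs_mul, abs_of_pos hepspos]
    have hCS : (∑ i ∈ Icc (-N+1) j, |w i| * 1)^2
        ≤ (∑ i ∈ Icc (-N+1) j, |w i|^2) * ∑ i ∈ Icc (-N+1) j, (1:ℝ)^2 :=
      Finset.sum_mul_sq_le_sq_mul_sq _ _ _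
    have h1 : ∑ i ∈ Icc (-N+1) j, |w i|^2 ≤ (N:ℝ) := by
      simp only [sq_abs]; exact hsub _ _ le_rfl hj2
    have h2 : ∑ i ∈ Icc (-N+1) j, (1:ℝ)^2 ≤ 2*(N:ℝ) := by
      simp only [one_pow, Finset.sum_const, nsmul_eq_mul, mul_one]
      have : (Icc (-N+1) j).card = (j + N).toNat := by
        rw [Int.card_Icc]; congr 1; omega
      rw [this]
      have : ((j+N).toNat : ℝ) = ((j:ℝ) + N) := by
        exact_mod_cast Int.toNat_of_nonneg (by omega)
      rw [this]
      have : (j:ℝ) ≤ (N:ℝ) := by exact_mod_cast hj2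
      linarith
    have hCS2 : (∑ i ∈ Icc (-N+1) j, |w i|)^2 ≤ 2*(N:ℝ)^2 := by
      simp only [mul_one] at hCS
      have hnn : (0:ℝ) ≤ ∑ i ∈ Icc (-N+1) j, |w i|^2 :=
        Finset.sum_nonneg fun i _ => by positivity
      calc (∑ i ∈ Icc (-N+1) j, |w i|)^2
          ≤ (∑ i ∈ Icc (-N+1) j, |w i|^2) * ∑ i ∈ Icc (-N+1) j, (1:ℝ)^2 := hCS
        _ ≤ (N:ℝ) * (2*(N:ℝ)) := mul_le_mul h1 h2 (Finset.sum_nonneg fun i _ => by positivity) hN0.le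
        _ = 2*(N:ℝ)^2 := by ring
    have hS : ∑ i ∈ Icc (-N+1) j, |w i| ≤ Real.sqrt 2 * (N:ℝ) := by
      have h0 : (0:ℝ) ≤ ∑ i ∈ Icc (-N+1) j, |w i| :=
        Finset.sum_nonneg fun i _ => abs_nonneg _
      have hs := Real.sqrt_le_sqrt hCS2
      rw [Real.sqrt_sq h0, Real.sqrt_mul (by norm_num : (0:ℝ) ≤ 2), Real.sqrt_sq hN0.le] at hs
      exact hs
    calc |v j| ≤ eps N * ∑ i ∈ Icc (-N+1) j, |w i| := by rw [← hstep]; exact habs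
      _ ≤ eps N * (Real.sqrt 2 * (N:ℝ)) := by
          apply mul_le_mul_of_nonneg_left hS hepspos.le
      _ = Real.sqrt 2 := by rw [heps]; field_simp
  -- bound on |δ j|
  have hδ_abs : ∀ j : ℤ, -N+1 ≤ j → j+1 ≤ N → |δ j| ≤ 2 * (N:ℝ) * Real.sqrt (N:ℝ) := by
    intro j h1 h2
    rw [hδj, abs_mul, abs_of_pos hN0]
    have : |w j - w (j+1)| ≤ 2 * Real.sqrt (N:ℝ) := by
      calc |w j - w (j+1)| ≤ |w j| + |w (j+1)| := abs_sub _ _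
        _ ≤ Real.sqrt N + Real.sqrt N := add_le_add (hw_abs j h1 (by omega)) (hw_abs (j+1) (by omega) h2)
        _ = 2 * Real.sqrt N := by ring
    calc (N:ℝ) * |w j - w (j+1)| ≤ (N:ℝ) * (2*Real.sqrt N) :=
        mul_le_mul_of_nonneg_left this hN0.le
      _ = 2 * (N:ℝ) * Real.sqrt N := by ring
  -- decomposition of the sum
  have hAsub : Icc (-K) K ⊆ Icc (-N+1) (N-1) := by
    intro x hx; simp only [Finset.mem_Icc] at *; omega
  have hsplit : ∑ j ∈ Icc (-N+1) (N-1), L2op N K v j * v j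
      = 4 * ∑ j ∈ Icc (-N+1) (N-1), δ j * v j
        + ∑ j ∈ Icc (-K) K, (δ (j+1) - δ j) * v j
        + ∑ j ∈ Icc (-K) K, (δ (j-1) - δ j) * v j := by
    have hpt : ∀ j ∈ Icc (-N+1) (N-1), L2op N K v j * v j
        = 4 * (δ j * v j)
          + (if j ∈ Icc (-K) K then ((δ (j+1) - δ j) * v j + (δ (j-1) - δ j) * v j) else 0) := by
      intro j _
      by_cases hA : -K ≤ j ∧ j ≤ K
      · rw [if_pos (Finset.mem_Icc.mpr hA)]
        unfold L2op
        rw [if_pos hA]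
        simp only [hδdef]
        rw [show j + 1 + 1 = j + 2 from by ring, show j + 1 - 1 = j from by ring,
          show j - 1 + 1 = j from by ring, show j - 1 - 1 = j - 2 from by ring]
        field_simp
        ring
      · rw [if_neg (fun h => hA (Finset.mem_Icc.mp h))]
        unfold L2op
        rw [if_neg hA]
        simp only [hδdef]
        field_simp
        ring
    rw [Finset.sum_congr rfl hpt, Finset.sum_add_distrib, ← Finset.mul_sum,
      Finset.sum_ite_mem, Finset.inter_eq_right.mpr hAsub, Finset.sum_add_distrib]
    ring
  -- value of the main term
  have hW : ∑ j ∈ Icc (-N+1) (N-1), (w (j+1) - w j) * v j = -1 := by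
    rw [abel_fwd w v (-N+1) (N-1) (by omega)]
    rw [show (-N+1+1 : ℤ) = -N+2 from by ring, show (N-1+1 : ℤ) = N from by ring]
    have hterm : ∀ j ∈ Icc (-N+2) (N-1), w j * (v (j-1) - v j) = -(eps N * (w j)^2) := by
      intro j _
      have h := hw_eq j
      linear_combination (-(w j)) * h
    rw [Finset.sum_congr rfl hterm]
    have hb1 : v (N-1) = -(eps N * w N) := by
      have h := hw_eq N; rw [hvN] at h; linarith
    have hb2 : v (-N+1) = eps N * w (-N+1) := by
      have h := hw_eq (-N+1)
      rw [show (-N+1-1 : ℤ) = -N from by ring, hvm] at h; linarith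
    have hdecomp : ∑ j ∈ Icc (-N+1) N, (w j)^2
        = (w (-N+1))^2 + (∑ j ∈ Icc (-N+2) (N-1), (w j)^2 + (w N)^2) := by
      have h1 := sum_Icc_bot (fun j => (w j)^2) (a := -N+1) (b := N-1) (by omega)
      rw [show (N-1+1:ℤ) = N from by ring, show (-N+1+1:ℤ) = -N+2 from by ring] at h1
      have h2 := sum_Icc_top (fun j => (w j)^2) (a := -N+2) (b := N-1) (by omega)
      rw [show (N-1+1:ℤ) = N from by ring] at h2
      rw [h1, h2]
    have hc : eps N * ((w (-N+1))^2 + (∑ j ∈ Icc (-N+2) (N-1), (w j)^2 + (w N)^2)) = 1 := by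
      rw [← hdecomp]; exact hsum1
    rw [Finset.sum_neg_distrib, ← Finset.mul_sum, hb1, hb2]
    linear_combination -hc
  have hT1 : ∑ j ∈ Icc (-N+1) (N-1), δ j * v j = (N:ℝ) := by
    have h : ∀ j ∈ Icc (-N+1) (N-1), δ j * v j = (-(N:ℝ)) * ((w (j+1) - w j) * v j) := by
      intro j _; rw [hδj]; ring
    rw [Finset.sum_congr rfl h, ← Finset.mul_sum, hW]; ring
  -- interface bound
  have hI : ∀ p q : ℤ, -N+1 ≤ p → p+1 ≤ N → -N ≤ q → q ≤ N →
      |δ p * v q| ≤ 2*Real.sqrt 2*(N:ℝ)*Real.sqrt (N:ℝ) := by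
    intro p q h1 h2 h3 h4
    rw [abs_mul]
    calc |δ p| * |v q| ≤ (2*(N:ℝ)*Real.sqrt (N:ℝ)) * Real.sqrt 2 :=
        mul_le_mul (hδ_abs p h1 h2) (hvb q h3 h4) (abs_nonneg _) (by positivity)
      _ = 2*Real.sqrt 2*(N:ℝ)*Real.sqrt (N:ℝ) := by ring
  -- the middle sums
  have hmid2 : |∑ j ∈ Icc (-K+1) K, δ j * (v (j-1) - v j)| ≤ 2*(N:ℝ) := by
    have hterm : ∀ j : ℤ, δ j * (v (j-1) - v j) = w j * w (j+1) - (w j)^2 := by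
      intro j
      have h1 := hw_eq j
      rw [hδj, show v (j-1) - v j = -(eps N * w j) from by linarith, heps]
      field_simp
      ring
    calc |∑ j ∈ Icc (-K+1) K, δ j * (v (j-1) - v j)|
        ≤ ∑ j ∈ Icc (-K+1) K, |δ j * (v (j-1) - v j)| := Finset.abs_sum_le_sum_abs _ _
      _ ≤ ∑ j ∈ Icc (-K+1) K, ((3/2) * (w j)^2 + (1/2) * (w (j+1))^2) := by
          apply Finset.sum_le_sum; intro j _
          rw [hterm j, abs_le]
          constructor <;> nlinarith [sq_nonneg (w j - w (j+1)), sq_nonneg (w j + w (j+1)), sq_nonneg (w j)]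
      _ = (3/2) * ∑ j ∈ Icc (-K+1) K, (w j)^2 + (1/2) * ∑ j ∈ Icc (-K+1) K, (w (j+1))^2 := by
          rw [Finset.sum_add_distrib, Finset.mul_sum, Finset.mul_sum]
      _ ≤ (3/2)*(N:ℝ) + (1/2)*(N:ℝ) := by
          have hs1 := hsub (-K+1) K (by omega) (by omega)
          have hs2 : ∑ j ∈ Icc (-K+1) K, (w (j+1))^2 ≤ (N:ℝ) := by
            rw [sum_shift (fun j => (w j)^2) (-K+1) K 1]
            exact hsub _ _ (by omega) (by omega)
          linarith
      _ = 2*(N:ℝ) := by ring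
  have hmid3 : |∑ j ∈ Icc (-K) (K-1), δ j * (v (j+1) - v j)| ≤ 2*(N:ℝ) := by
    have hterm : ∀ j : ℤ, δ j * (v (j+1) - v j) = w j * w (j+1) - (w (j+1))^2 := by
      intro j
      have h1 := hw_eq (j+1)
      rw [show (j+1-1:ℤ) = j from by ring] at h1
      rw [hδj, show v (j+1) - v j = eps N * w (j+1) from by linarith, heps]
      field_simp
    calc |∑ j ∈ Icc (-K) (K-1), δ j * (v (j+1) - v j)|
        ≤ ∑ j ∈ Icc (-K) (K-1), |δ j * (v (j+1) - v j)| := Finset.abs_sum_le_sum_abs _ _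
      _ ≤ ∑ j ∈ Icc (-K) (K-1), ((1/2) * (w j)^2 + (3/2) * (w (j+1))^2) := by
          apply Finset.sum_le_sum; intro j _
          rw [hterm j, abs_le]
          constructor <;> nlinarith [sq_nonneg (w j - w (j+1)), sq_nonneg (w j + w (j+1)), sq_nonneg (w (j+1))]
      _ = (1/2) * ∑ j ∈ Icc (-K) (K-1), (w j)^2 + (3/2) * ∑ j ∈ Icc (-K) (K-1), (w (j+1))^2 := by
          rw [Finset.sum_add_distrib, Finset.mul_sum, Finset.mul_sum]
      _ ≤ (1/2)*(N:ℝ) + (3/2)*(N:ℝ) := by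
          have hs1 := hsub (-K) (K-1) (by omega) (by omega)
          have hs2 : ∑ j ∈ Icc (-K) (K-1), (w (j+1))^2 ≤ (N:ℝ) := by
            rw [sum_shift (fun j => (w j)^2) (-K) (K-1) 1]
            exact hsub _ _ (by omega) (by omega)
          linarith
      _ = 2*(N:ℝ) := by ring
  -- bounds on the two atomistic correction sums
  have hfin2 : |∑ j ∈ Icc (-K) K, (δ (j+1) - δ j) * v j|
      ≤ 2*(N:ℝ) + 2*(2*Real.sqrt 2*(N:ℝ)*Real.sqrt (N:ℝ)) := by
    rw [abel_fwd δ v (-K) K (by omega)]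
    have i1 := hI (K+1) K (by omega) (by omega) (by omega) (by omega)
    have i2 := hI (-K) (-K) (by omega) (by omega) (by omega) (by omega)
    calc |∑ j ∈ Icc (-K+1) K, δ j * (v (j-1) - v j) + δ (K+1) * v K - δ (-K) * v (-K)|
        ≤ |∑ j ∈ Icc (-K+1) K, δ j * (v (j-1) - v j)| + |δ (K+1) * v K| + |δ (-K) * v (-K)| := by
          have := abs_add_three (∑ j ∈ Icc (-K+1) K, δ j * (v (j-1) - v j)) (δ (K+1) * v K) (-(δ (-K) * v (-K)))
          rw [abs_neg] at this
          calc |∑ j ∈ Icc (-K+1) K, δ j * (v (j-1) - v j) + δ (K+1) * v K - δ (-K) * v (-K)|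
              = |∑ j ∈ Icc (-K+1) K, δ j * (v (j-1) - v j) + δ (K+1) * v K + -(δ (-K) * v (-K))| := by
                rw [sub_eq_add_neg]
            _ ≤ _ := this
      _ ≤ 2*(N:ℝ) + (2*Real.sqrt 2*(N:ℝ)*Real.sqrt (N:ℝ)) + (2*Real.sqrt 2*(N:ℝ)*Real.sqrt (N:ℝ)) := by
          exact add_le_add (add_le_add hmid2 i1) i2
      _ = 2*(N:ℝ) + 2*(2*Real.sqrt 2*(N:ℝ)*Real.sqrt (N:ℝ)) := by ring
  have hfin3 : |∑ j ∈ Icc (-K) K, (δ (j-1) - δ j) * v j|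
      ≤ 2*(N:ℝ) + 2*(2*Real.sqrt 2*(N:ℝ)*Real.sqrt (N:ℝ)) := by
    rw [abel_bwd δ v (-K) K (by omega)]
    have i1 := hI (-K-1) (-K) (by omega) (by omega) (by omega) (by omega)
    have i2 := hI K K (by omega) (by omega) (by omega) (by omega)
    calc |∑ j ∈ Icc (-K) (K-1), δ j * (v (j+1) - v j) + δ (-K-1) * v (-K) - δ K * v K|
        ≤ |∑ j ∈ Icc (-K) (K-1), δ j * (v (j+1) - v j)| + |δ (-K-1) * v (-K)| + |δ K * v K| := by
          have := abs_add_three (∑ j ∈ Icc (-K) (K-1), δ j * (v (j+1) - v j)) (δ (-K-1) * v (-K)) (-(δ K * v K))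
          rw [abs_neg] at this
          calc |∑ j ∈ Icc (-K) (K-1), δ j * (v (j+1) - v j) + δ (-K-1) * v (-K) - δ K * v K|
              = |∑ j ∈ Icc (-K) (K-1), δ j * (v (j+1) - v j) + δ (-K-1) * v (-K) + -(δ K * v K)| := by
                rw [sub_eq_add_neg]
            _ ≤ _ := this
      _ ≤ 2*(N:ℝ) + (2*Real.sqrt 2*(N:ℝ)*Real.sqrt (N:ℝ)) + (2*Real.sqrt 2*(N:ℝ)*Real.sqrt (N:ℝ)) := by
          exact add_le_add (add_le_add hmid3 i1) i2
      _ = 2*(N:ℝ) + 2*(2*Real.sqrt 2*(N:ℝ)*Real.sqrt (N:ℝ)) := by ring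
  -- assembly
  have hsqrtN1 : 1 ≤ Real.sqrt (N:ℝ) := by
    rw [show (1:ℝ) = Real.sqrt 1 from (Real.sqrt_one).symm]
    exact Real.sqrt_le_sqrt (by exact_mod_cast hN1)
  have hsqrt2 : Real.sqrt 2 ≤ 3/2 := by
    nlinarith [Real.sq_sqrt (by norm_num : (0:ℝ) ≤ 2), Real.sqrt_nonneg 2]
  set A := ∑ j ∈ Icc (-K) K, (δ (j+1) - δ j) * v j with hA
  set B := ∑ j ∈ Icc (-K) K, (δ (j-1) - δ j) * v j with hB
  rw [hsplit, hT1]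
  have hbd : |4 * (N:ℝ) + A + B| ≤ 4*(N:ℝ) + |A| + |B| := by
    have h := abs_add_three (4*(N:ℝ)) A B
    rw [abs_of_pos (by positivity : (0:ℝ) < 4*(N:ℝ))] at h
    exact h
  calc |eps N * (4 * (N:ℝ) + A + B)|
      = eps N * |4 * (N:ℝ) + A + B| := by rw [abs_mul, abs_of_pos hepspos]
    _ ≤ eps N * (4*(N:ℝ) + (2*(N:ℝ) + 2*(2*Real.sqrt 2*(N:ℝ)*Real.sqrt (N:ℝ)))
          + (2*(N:ℝ) + 2*(2*Real.sqrt 2*(N:ℝ)*Real.sqrt (N:ℝ)))) := by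
        apply mul_le_mul_of_nonneg_left _ hepspos.le
        calc |4 * (N:ℝ) + A + B| ≤ 4*(N:ℝ) + |A| + |B| := hbd
          _ ≤ _ := by linarith [hfin2, hfin3]
    _ = 8 + 8 * Real.sqrt 2 * Real.sqrt (N:ℝ) := by
        rw [heps]; field_simp; ring
    _ ≤ 21 * Real.sqrt (N:ℝ) := by nlinarith [Real.sqrt_nonneg (N:ℝ)]
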